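/- The flux of Shima et al. is KEP and PEP: for every γ > 1 its components satisfy f^num_{ρv}(u₋, u₊) = {v} f^num_ρ(u₋, u₊) + {p} for all pairs of states, and for every pair of states with common velocity v₋ = v₊ = v and common pressure p₋ = p₊ = p one has f^num_ρ = {ρ} v, f^num_{ρv} = v f^num_ρ + p, and f^num_{ρe} = (v²/2) f^num_ρ + (γ/(γ−1)) p v. -/
import Mathlib

noncomputable section
open Real

/-- A state `u = (ρ, v, p)` of the 1D compressible Euler equations:
density `u.1`, velocity `u.2.1`, pressure `u.2.2`. -/
abbrev EulerState := ℝ × ℝ × ℝ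

/-- The KEP and PEP two-point flux of Shima et al. -/
def shimaFlux (γ : ℝ) (um up : EulerState) : EulerState :=
  (((um.1 + up.1)/2) * ((um.2.1 + up.2.1)/2),
   ((um.1 + up.1)/2) * ((um.2.1 + up.2.1)/2)^2 + (um.2.2 + up.2.2)/2,
   (1/2) * ((um.1 + up.1)/2) * ((um.2.1 + up.2.1)/2) * ((up.2.1*um.2.1 + um.2.1*up.2.1)/2)
     + (1/(γ-1)) * ((um.2.2 + up.2.2)/2) * ((um.2.1 + up.2.1)/2)
     + (up.2.2*um.2.1 + um.2.2*up.2.1)/2)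

/-- the flux of Shima et al. is KEP and PEP: for every `γ > 1` it
satisfies `f^num_{ρv} = {v} f^num_ρ + {p}` for all pairs of states, and at any
pressure equilibrium (`v₋ = v₊ = v`, `p₋ = p₊ = p`) one has `f^num_ρ = {ρ} v`,
`f^num_{ρv} = v f^num_ρ + p`, `f^num_{ρe} = (v²/2) f^num_ρ + (γ/(γ-1)) p v`. -/
theorem shimaFlux_KEP_and_PEP (γ : ℝ) (hγ : 1 < γ) :
    (∀ ρm ρp vm vp pm pp : ℝ, 0 < ρm → 0 < ρp → 0 < pm → 0 < pp →
      (shimaFlux γ (ρm, vm, pm) (ρp, vp, pp)).2.1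
        = ((vm + vp)/2) * (shimaFlux γ (ρm, vm, pm) (ρp, vp, pp)).1 + (pm + pp)/2)
    ∧
    (∀ ρm ρp v p : ℝ, 0 < ρm → 0 < ρp → 0 < p →
      (shimaFlux γ (ρm, v, p) (ρp, v, p)).1 = ((ρm + ρp)/2) * v ∧
      (shimaFlux γ (ρm, v, p) (ρp, v, p)).2.1
        = v * (shimaFlux γ (ρm, v, p) (ρp, v, p)).1 + p ∧
      (shimaFlux γ (ρm, v, p) (ρp, v, p)).2.2
        = (v^2/2) * (shimaFlux γ (ρm, v, p) (ρp, v, p)).1 + (γ/(γ-1)) * p * v) := by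
  have hne : γ - 1 ≠ 0 := sub_ne_zero.2 (ne_of_gt hγ)
  refine ⟨fun ρm ρp vm vp pm pp _ _ _ _ => by simp only [shimaFlux]; ring,
    fun ρm ρp v p _ _ _ => ⟨by simp only [shimaFlux]; ring, by simp only [shimaFlux]; ring, ?_⟩⟩
  simp only [shimaFlux]
  field_simp
  ring
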